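/- Let n ≥ 1 and let x, y, z ∈ K_n. Assume that x belongs to the submonoid of K_n generated by {a_1, a_2, …, a_{n-1}} and that z belongs to the submonoid of K_n generated by {a_2, a_3, …, a_n}. If x·y·z = f, then y = f. -/

import Mathlib

namespace Kiselman

/-- The defining relations of Kiselman's semigroup on the free monoid over `Fin n`,
where the index `i : Fin n` represents the generator `a_{i+1}` (so letters are 0-based). -/
def Rel (n : ℕ) : FreeMonoid (Fin n) → FreeMonoid (Fin n) → Prop := fun u v =>
  (∃ i : Fin n, u = .of i * .of i ∧ v = .of i) ∨
  (∃ i j : Fin n, j < i ∧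
    ((u = .of i * .of j * .of i ∧ v = .of i * .of j) ∨
     (u = .of j * .of i * .of j ∧ v = .of i * .of j)))

/-- Kiselman's semigroup (monoid) `K n`, presented by the relations `Rel n`. -/
def K (n : ℕ) : Type := (conGen (Rel n)).Quotient

instance (n : ℕ) : Monoid (K n) := inferInstanceAs (Monoid (conGen (Rel n)).Quotient)

/-- The canonical epimorphism `φ` from the free monoid onto `K n`. -/
def phi (n : ℕ) : FreeMonoid (Fin n) →* K n := Con.mk' _

/-- `φ` applied to a word given as a list of (0-based) letters. -/
def phiL (n : ℕ) (w : List (Fin n)) : K n := phi n (FreeMonoid.ofList w)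

/-- The generator `a_{i+1}` of `K n` (`i` is the 0-based index). -/
def gen {n : ℕ} (i : Fin n) : K n := phi n (FreeMonoid.of i)

/-- The word `a_hi a_{hi-1} ⋯ a_lo` (letters named 1-based), as a list of 0-based indices:
`[hi-1, hi-2, …, lo-1]` (capped at `n`). -/
def descList (n lo hi : ℕ) : List (Fin n) :=
  ((List.finRange n).filter (fun k => decide (lo ≤ k.val + 1 ∧ k.val + 1 ≤ hi))).reverse

/-- The zero element `f = a_n a_{n-1} ⋯ a_2 a_1` of `K n`. -/
def fEl (n : ℕ) : K n := phiL n (descList n 1 n)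

/-- A word `w` is canonical if for every factorization `w = p ++ [i] ++ u ++ [i] ++ q`
there are letters `j > i` and `k < i` occurring in `u`. -/
def Canonical {n : ℕ} (w : List (Fin n)) : Prop :=
  ∀ (p u q : List (Fin n)) (i : Fin n),
    w = p ++ [i] ++ u ++ [i] ++ q →
    (∃ j ∈ u, i < j) ∧ (∃ k ∈ u, k < i)

/-- The submonoid of `K n` generated by `{a_2, a_3, …, a_n}`. -/
def upper (n : ℕ) : Submonoid (K n) := Submonoid.closure (gen '' {i : Fin n | i.val ≠ 0})

/-- The submonoid of `K n` generated by `{a_1, a_2, …, a_{n-1}}`. -/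
def lower (n : ℕ) : Submonoid (K n) := Submonoid.closure (gen '' {i : Fin n | i.val + 1 ≠ n})

/-- `m(x) = min { i ∈ {0,…,n} : x ⬝ (a_i a_{i-1} ⋯ a_1) = f }`. -/
noncomputable def mIdx {n : ℕ} (x : K n) : ℕ :=
  sInf {i : ℕ | x * phiL n (descList n 1 i) = fEl n}

section Aux

variable {n : ℕ}

lemma phiL_append (u v : List (Fin n)) : phiL n (u ++ v) = phiL n u * phiL n v := by
  unfold phiL
  rw [FreeMonoid.ofList_append, map_mul]

lemma phiL_nil : phiL n [] = 1 := rfl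

lemma phiL_cons (c : Fin n) (u : List (Fin n)) : phiL n (c :: u) = gen c * phiL n u := by
  unfold phiL
  rw [FreeMonoid.ofList_cons, map_mul]; rfl

lemma phiL_singleton (c : Fin n) : phiL n [c] = gen c := by
  rw [phiL_cons, phiL_nil, mul_one]

lemma phi_eq_of_rel {u v : FreeMonoid (Fin n)} (h : Rel n u v) : phi n u = phi n v := by
  have hc : conGen (Rel n) u v := ConGen.Rel.of _ _ h
  exact (Con.eq _).mpr hc

lemma gen_idem (i : Fin n) : gen i * gen i = gen i := by
  have := phi_eq_of_rel (n := n) (u := .of i * .of i) (v := .of i) (Or.inl ⟨i, rfl, rfl⟩)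
  simpa [gen, map_mul] using this

lemma rel_bb {i j : Fin n} (h : j < i) : gen i * gen j * gen i = gen i * gen j := by
  have := phi_eq_of_rel (n := n) (u := .of i * .of j * .of i) (v := .of i * .of j)
    (Or.inr ⟨i, j, h, Or.inl ⟨rfl, rfl⟩⟩)
  simpa [gen, map_mul] using this

lemma rel_ss {i j : Fin n} (h : j < i) : gen j * gen i * gen j = gen i * gen j := by
  have := phi_eq_of_rel (n := n) (u := .of j * .of i * .of j) (v := .of i * .of j)
    (Or.inr ⟨i, j, h, Or.inr ⟨rfl, rfl⟩⟩)
  simpa [gen, map_mul] using this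


lemma lemA (u : List (Fin n)) (c : Fin n) (h : ∀ x ∈ u, x < c) :
    gen c * phiL n u * gen c = gen c * phiL n u := by
  induction u with
  | nil => simp [phiL_nil, gen_idem]
  | cons d u ih =>
    have hd : d < c := h d List.mem_cons_self
    have key : gen c * gen d * gen c = gen c * gen d := rel_bb hd
    have ih' := ih (fun x hx => h x (List.mem_cons_of_mem d hx))
    rw [phiL_cons]
    calc gen c * (gen d * phiL n u) * gen c
        = gen c * gen d * (phiL n u * gen c) := by rw [mul_assoc, mul_assoc, mul_assoc]
      _ = gen c * gen d * gen c * (phiL n u * gen c) := by rw [key]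
      _ = gen c * gen d * (gen c * phiL n u * gen c) := by
            rw [mul_assoc (gen c * gen d), ← mul_assoc (gen c)]
      _ = gen c * gen d * (gen c * phiL n u) := by rw [ih']
      _ = gen c * gen d * gen c * phiL n u := by rw [mul_assoc (gen c * gen d)]
      _ = gen c * gen d * phiL n u := by rw [key]
      _ = gen c * (gen d * phiL n u) := by rw [mul_assoc]

lemma lemA' (u : List (Fin n)) (c : Fin n) (h : ∀ x ∈ u, c < x) :
    gen c * phiL n u * gen c = phiL n u * gen c := by
  induction u using List.reverseRecOn with
  | nil => simp [phiL_nil, gen_idem]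
  | append_singleton w d ih =>
    have hd : c < d := h d (by simp)
    have key : gen c * gen d * gen c = gen d * gen c := rel_ss hd
    have ih' := ih (fun x hx => h x (by simp [hx]))
    rw [phiL_append, phiL_singleton]
    calc gen c * (phiL n w * gen d) * gen c
        = gen c * phiL n w * (gen d * gen c) := by rw [mul_assoc, mul_assoc, mul_assoc]
      _ = gen c * phiL n w * (gen c * gen d * gen c) := by rw [key]
      _ = gen c * phiL n w * gen c * (gen d * gen c) := by
            rw [mul_assoc (gen c * phiL n w), ← mul_assoc (gen c)]
      _ = phiL n w * gen c * (gen d * gen c) := by rw [ih']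
      _ = phiL n w * (gen c * gen d * gen c) := by rw [mul_assoc, ← mul_assoc (gen c)]
      _ = phiL n w * (gen d * gen c) := by rw [key]
      _ = phiL n w * gen d * gen c := by rw [mul_assoc]

lemma redA (p u q : List (Fin n)) (c : Fin n) (h : ∀ x ∈ u, x < c) :
    phiL n (p ++ c :: (u ++ c :: q)) = phiL n (p ++ c :: (u ++ q)) := by
  have key := lemA u c h
  simp only [phiL_append, phiL_cons]
  calc phiL n p * (gen c * (phiL n u * (gen c * phiL n q)))
      = phiL n p * ((gen c * phiL n u * gen c) * phiL n q) := by
        simp only [mul_assoc]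
    _ = phiL n p * ((gen c * phiL n u) * phiL n q) := by rw [key]
    _ = phiL n p * (gen c * (phiL n u * phiL n q)) := by simp only [mul_assoc]

lemma redA' (p u q : List (Fin n)) (c : Fin n) (h : ∀ x ∈ u, c < x) :
    phiL n (p ++ c :: (u ++ c :: q)) = phiL n (p ++ (u ++ c :: q)) := by
  have key := lemA' u c h
  simp only [phiL_append, phiL_cons]
  calc phiL n p * (gen c * (phiL n u * (gen c * phiL n q)))
      = phiL n p * ((gen c * phiL n u * gen c) * phiL n q) := by
        simp only [mul_assoc]
    _ = phiL n p * ((phiL n u * gen c) * phiL n q) := by rw [key]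
    _ = phiL n p * (phiL n u * (gen c * phiL n q)) := by simp only [mul_assoc]


/-- one step of the chain-matching automaton (over `ℕ` letters). -/
def stepN (c s : ℕ) : ℕ := if c = s then s + 1 else s

/-- state of the automaton after reading the word right-to-left. -/
def chiN (w : List ℕ) (k : ℕ) : ℕ := w.foldr stepN k

@[simp] lemma chiN_nil (k : ℕ) : chiN [] k = k := rfl

@[simp] lemma chiN_cons (c : ℕ) (w : List ℕ) (k : ℕ) :
    chiN (c :: w) k = stepN c (chiN w k) := rfl

lemma chiN_append (u v : List ℕ) (k : ℕ) : chiN (u ++ v) k = chiN u (chiN v k) := by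
  unfold chiN
  rw [List.foldr_append]

/-- the automaton letter action, as an element of `Function.End ℕ`. -/
def stepF (c : Fin n) : Function.End ℕ := stepN c.val

/-- the monoid homomorphism from the free monoid to the transition monoid. -/
def FF : FreeMonoid (Fin n) →* Function.End ℕ := FreeMonoid.lift stepF

lemma FF_eval (w : List (Fin n)) (k : ℕ) :
    FF (FreeMonoid.ofList w) k = chiN (w.map Fin.val) k := by
  induction w with
  | nil => rfl
  | cons c w ih =>
    rw [FreeMonoid.ofList_cons, map_mul]
    show (FF (FreeMonoid.of c)) ((FF (FreeMonoid.ofList w)) k) = _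
    rw [ih]
    simp [FF, FreeMonoid.lift_eval_of, stepF]

lemma FF_of_rel {u v : FreeMonoid (Fin n)} (h : Rel n u v) : FF u = FF v := by
  rcases h with ⟨i, hu, hv⟩ | ⟨i, j, hij, ⟨hu, hv⟩ | ⟨hu, hv⟩⟩ <;> subst hu hv
  · simp only [map_mul]
    funext s
    change FF (FreeMonoid.of i) (FF (FreeMonoid.of i) s) = FF (FreeMonoid.of i) s
    simp only [(show ∀ (f g : Function.End ℕ) (x : ℕ), (f * g) x = f (g x) from fun _ _ _ => rfl), Function.comp_apply, FF, FreeMonoid.lift_eval_of, stepF,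
      stepN]
    split_ifs <;> omega
  · have hji : (j.val : ℕ) < i.val := hij
    simp only [map_mul]
    funext s
    change FF (FreeMonoid.of i) (FF (FreeMonoid.of j) (FF (FreeMonoid.of i) s)) = FF (FreeMonoid.of i) (FF (FreeMonoid.of j) s)
    simp only [(show ∀ (f g : Function.End ℕ) (x : ℕ), (f * g) x = f (g x) from fun _ _ _ => rfl), Function.comp_apply, FF, FreeMonoid.lift_eval_of, stepF,
      stepN]
    split_ifs <;> omega
  · have hji : (j.val : ℕ) < i.val := hij
    simp only [map_mul]
    funext s
    change FF (FreeMonoid.of j) (FF (FreeMonoid.of i) (FF (FreeMonoid.of j) s)) = FF (FreeMonoid.of i) (FF (FreeMonoid.of j) s)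
    simp only [(show ∀ (f g : Function.End ℕ) (x : ℕ), (f * g) x = f (g x) from fun _ _ _ => rfl), Function.comp_apply, FF, FreeMonoid.lift_eval_of, stepF,
      stepN]
    split_ifs <;> omega

lemma chi_congr {u v : List (Fin n)} (h : phiL n u = phiL n v) (k : ℕ) :
    chiN (u.map Fin.val) k = chiN (v.map Fin.val) k := by
  have hle : conGen (Rel n) ≤ Con.ker FF :=
    Con.conGen_le.mpr (fun x y hr => (Con.ker_rel _).mpr (FF_of_rel hr))
  have hcon : conGen (Rel n) (FreeMonoid.ofList u) (FreeMonoid.ofList v) := (Con.eq _).mp h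
  have hFF : FF (FreeMonoid.ofList u) = FF (FreeMonoid.ofList v) :=
    (Con.ker_rel _).mp (hle hcon)
  rw [← FF_eval, ← FF_eval, hFF]

lemma chiN_le (w : List ℕ) (k : ℕ) : chiN w k ≤ k + w.length := by
  induction w with
  | nil => simp
  | cons c w ih => simp only [chiN_cons, stepN, List.length_cons]; split_ifs <;> omega

lemma chiN_eq_max (w : List ℕ) (k : ℕ) (h : chiN w k = k + w.length) :
    w = (List.range' k w.length).reverse := by
  induction w with
  | nil => simp
  | cons c w ih =>
    have hb := chiN_le w k
    simp only [chiN_cons, stepN, List.length_cons] at h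
    split_ifs at h with hc
    · have h1 : chiN w k = k + w.length := by omega
      have h2 := ih h1
      have hc' : c = k + w.length := by omega
      have hr : List.range' k (w.length + 1) = List.range' k w.length ++ [k + w.length] := by
        rw [List.range'_concat]; norm_num
      rw [List.length_cons, hr, List.reverse_append, List.reverse_singleton,
        List.singleton_append]
      congr 1
    · omega

lemma chiN_chain (k L : ℕ) : chiN ((List.range' k L).reverse) k = k + L := by
  induction L with
  | zero => simp
  | succ L ih =>
    have hr : List.range' k (L + 1) = List.range' k L ++ [k + L] := by
      rw [List.range'_concat]; norm_num
    rw [hr, List.reverse_append]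
    simp only [List.reverse_singleton, List.singleton_append, chiN_cons, ih, stepN]
    simp
    omega

lemma chiN_no_letter (w : List ℕ) (m : ℕ) (h : ∀ x ∈ w, x ≠ m) : chiN w m = m := by
  induction w with
  | nil => rfl
  | cons c w ih =>
    have hc : c ≠ m := h c List.mem_cons_self
    have := ih (fun x hx => h x (List.mem_cons_of_mem c hx))
    simp [chiN_cons, this, stepN, hc]

lemma mem_of_chiN_ne (w : List ℕ) (m : ℕ) (h : chiN w m ≠ m) : m ∈ w := by
  by_contra hm
  exact h (chiN_no_letter w m (fun x hx => fun hxm => hm (hxm ▸ hx)))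

lemma chiN_block (N : ℕ) (w : List ℕ) (h : ∀ x ∈ w, x + 1 ≠ N) :
    ∀ s, N ≤ chiN w s → N ≤ s := by
  induction w with
  | nil => intro s hs; simpa using hs
  | cons c w ih =>
    intro s hs
    have ih' := ih (fun x hx => h x (List.mem_cons_of_mem c hx))
    by_cases ht : N ≤ chiN w s
    · exact ih' s ht
    · exfalso
      have hc : c + 1 ≠ N := h c List.mem_cons_self
      simp only [chiN_cons, stepN] at hs
      split_ifs at hs <;> omega

lemma exists_last_mem {a : ℕ} : ∀ {l : List ℕ}, a ∈ l → ∃ p r, l = p ++ a :: r ∧ a ∉ r := by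
  intro l
  induction l with
  | nil => intro h; simp at h
  | cons c t ih =>
    intro h
    by_cases hat : a ∈ t
    · obtain ⟨p, r, hpr, har⟩ := ih hat
      exact ⟨c :: p, r, by rw [hpr]; rfl, har⟩
    · have hac : a = c := by
        rcases List.mem_cons.mp h with h1 | h2
        · exact h1
        · exact absurd h2 hat
      exact ⟨[], t, by simp [hac], hat⟩

lemma exists_first_mem {a : ℕ} : ∀ {l : List ℕ}, a ∈ l → ∃ p r, l = p ++ a :: r ∧ a ∉ p := by
  intro l
  induction l with
  | nil => intro h; simp at h
  | cons c t ih =>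
    intro h
    by_cases hac : a = c
    · exact ⟨[], t, by simp [hac], by simp⟩
    · have hat : a ∈ t := by
        rcases List.mem_cons.mp h with h1 | h2
        · exact absurd h1 hac
        · exact h2
      obtain ⟨p, r, hpr, hap⟩ := ih hat
      exact ⟨c :: p, r, by rw [hpr]; rfl, by simp [hap, hac]⟩

/-- the stitched word from level `0` up to (but excluding chain letter) `k`. -/
def WW (g : ℕ → List ℕ) (k : ℕ) : List ℕ :=
  (((List.range' 0 k).reverse).map (fun i => i :: g i)).flatten

lemma greedy : ∀ (d m : ℕ) (v : List ℕ), m + d ≤ chiN v m →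
    ∃ g : ℕ → List ℕ,
      v = g (m + d) ++ (((List.range' m d).reverse).map (fun i => i :: g i)).flatten ∧
      ∀ i, m ≤ i → i < m + d → i ∉ g i := by
  intro d
  induction d with
  | zero =>
    intro m v _
    exact ⟨fun _ => v, by simp, by omega⟩
  | succ d ih =>
    intro m v h
    have hmem : m ∈ v := by
      apply mem_of_chiN_ne
      omega
    obtain ⟨p, r, hpr, hmr⟩ := exists_last_mem hmem
    have hsplit : chiN v m = chiN p (m + 1) := by
      rw [hpr, chiN_append]
      have h1 : chiN (m :: r) m = m + 1 := by
        have h2 : chiN r m = m := chiN_no_letter r m (fun x hx hxm => hmr (hxm ▸ hx))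
        simp [chiN_cons, h2, stepN]
      rw [h1]
    have hp : (m + 1) + d ≤ chiN p (m + 1) := by rw [← hsplit]; omega
    obtain ⟨g', hg'1, hg'2⟩ := ih (m + 1) p hp
    refine ⟨fun i => if i = m then r else g' i, ?_, ?_⟩
    · have hk : m + (d + 1) = (m + 1) + d := by omega
      have hrange : List.range' m (d + 1) = m :: List.range' (m + 1) d := List.range'_succ
      rw [hk, hpr, hg'1, hrange]
      have hne : ∀ i ∈ List.range' (m + 1) d, i ≠ m := by
        intro i hi
        have := List.mem_range'_1.mp hi
        omega
      have hmapeq : (List.range' (m+1) d).reverse.map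
            (fun i => i :: (if i = m then r else g' i)) =
          (List.range' (m+1) d).reverse.map (fun i => i :: g' i) := by
        apply List.map_congr_left
        intro a ha
        have : a ≠ m := hne a (List.mem_reverse.mp ha)
        simp [this]
      simp only [List.reverse_cons, List.map_append, List.flatten_append, hmapeq]
      have hgm1 : ((m + 1) + d ≠ m) := by omega
      simp [hgm1]
    · intro i h1 h2
      by_cases him : i = m
      · simp [him, hmr]
      · have : m + 1 ≤ i := by omega
        simp only [if_neg him]
        exact hg'2 i this (by omega)

lemma splitW (g : ℕ → List ℕ) (j k : ℕ) (h : j < k) :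
    WW g k = (((List.range' (j+1) (k-j-1)).reverse).map (fun i => i :: g i)).flatten
      ++ (j :: g j) ++ WW g j := by
  have h1 : List.range' 0 k = List.range' 0 (j+1) ++ List.range' (j+1) (k-j-1) := by
    have h0 := List.range'_append (s := 0) (m := j+1) (n := k-j-1) (step := 1)
    simp only [Nat.mul_one, Nat.zero_add, one_mul] at h0
    rw [show j + 1 + (k - j - 1) = k from by omega] at h0
    exact h0.symm
  have h2 : List.range' 0 (j+1) = List.range' 0 j ++ [j] := by
    rw [List.range'_concat]; norm_num
  unfold WW
  rw [h1, h2, List.reverse_append, List.reverse_append, List.map_append, List.map_append,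
    List.flatten_append, List.flatten_append]
  simp [List.append_assoc]

lemma mem_mid {g : ℕ → List ℕ} {a b x : ℕ}
    (hx : x ∈ (((List.range' a b).reverse).map (fun i => i :: g i)).flatten) :
    ∃ i, a ≤ i ∧ i < a + b ∧ (x = i ∨ x ∈ g i) := by
  rw [List.mem_flatten] at hx
  obtain ⟨l, hl, hxl⟩ := hx
  rw [List.mem_map] at hl
  obtain ⟨i, hi, hil⟩ := hl
  rw [List.mem_reverse, List.mem_range'_1] at hi
  subst hil
  rcases List.mem_cons.mp hxl with h1 | h2
  · exact ⟨i, hi.1, hi.2, Or.inl h1⟩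
  · exact ⟨i, hi.1, hi.2, Or.inr h2⟩

lemma W_all_empty {g : ℕ → List ℕ} {k : ℕ} (h : ∀ i < k, g i = []) :
    WW g k = (List.range' 0 k).reverse := by
  unfold WW
  have : (List.range' 0 k).reverse.map (fun i => i :: g i) =
      (List.range' 0 k).reverse.map (fun i => [i]) := by
    apply List.map_congr_left
    intro a ha
    rw [List.mem_reverse, List.mem_range'_1] at ha
    simp [h a (by omega)]
  rw [this]
  induction ((List.range' 0 k).reverse) with
  | nil => rfl
  | cons c t iht => simp_all

lemma lemCN (n : ℕ) (v : List ℕ) (hb : ∀ x ∈ v, x < n) (hchi : n ≤ chiN v 0)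
    (hlen : n < v.length) :
    ∃ P C U Q, v = P ++ C :: (U ++ C :: Q) ∧
      ((∀ x ∈ U, x < C) ∨ (∀ x ∈ U, C < x)) := by
  obtain ⟨g, hv0, hg0⟩ := greedy n 0 v (by simpa using hchi)
  have hv : v = g n ++ WW g n := by simpa [WW] using hv0
  have hg : ∀ i < n, i ∉ g i := fun i hi => hg0 i (Nat.zero_le i) (by omega)
  have hjm : ∀ i, i ≤ n → ∀ x ∈ g i, x ∈ v := by
    intro i hi x hx
    rcases eq_or_lt_of_le hi with heq | hlt
    · subst heq; rw [hv]; exact List.mem_append_left _ hx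
    · rw [hv]
      refine List.mem_append_right _ ?_
      unfold WW
      refine List.mem_flatten.mpr ⟨i :: g i, List.mem_map.mpr ⟨i, ?_, rfl⟩,
        List.mem_cons_of_mem _ hx⟩
      rw [List.mem_reverse, List.mem_range'_1]
      omega
  have hjunk : ∃ i₀, i₀ ≤ n ∧ g i₀ ≠ [] := by
    by_contra hno
    push_neg at hno
    have hW := W_all_empty (g := g) (k := n) (fun i hi => hno i (le_of_lt hi))
    have hvl : v.length = n := by
      rw [hv, hW, hno n le_rfl]
      simp
    omega
  obtain ⟨i₀, hi₀n, hgi₀⟩ := hjunk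
  obtain ⟨c₀, hc₀⟩ := List.exists_mem_of_ne_nil _ hgi₀
  set PA : ℕ → Prop := fun c => c ∈ (List.range (min (c+1) (n+1))).flatMap g with hPA
  have hPAiff : ∀ c, PA c ↔ ∃ i, i ≤ c ∧ i ≤ n ∧ c ∈ g i := by
    intro c
    rw [hPA]
    simp only [List.mem_flatMap, List.mem_range]
    constructor
    · rintro ⟨i, hi, hgi⟩; exact ⟨i, by omega, by omega, hgi⟩
    · rintro ⟨i, h1, h2, hgi⟩; exact ⟨i, by omega, hgi⟩
  have hPAdec : DecidablePred PA := fun c => by rw [hPA]; infer_instance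
  by_cases hA : ∃ c, PA c
  case pos =>
    -- CASE A : some junk letter sits at or after its chain position
    obtain ⟨c₁, hc₁⟩ := hA
    obtain ⟨i₁, hi₁c, hi₁n, hc₁g⟩ := (hPAiff c₁).mp hc₁
    have hc₁n : c₁ < n := hb _ (hjm i₁ hi₁n c₁ hc₁g)
    set E := @Nat.findGreatest PA hPAdec (n-1) with hE
    have hPAE : PA E := Nat.findGreatest_spec (m := c₁) (by omega) hc₁
    have hEmax : ∀ x, E < x → x ≤ n - 1 → ¬ PA x :=
      fun x h1 h2 => Nat.findGreatest_is_greatest h1 h2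
    obtain ⟨iE, hiEE, hiEn, hEg⟩ := (hPAiff E).mp hPAE
    have hEn : E < n := hb _ (hjm iE hiEn E hEg)
    set I := Nat.findGreatest (fun i => E ∈ g i) E with hI
    have hIg : E ∈ g I :=
      Nat.findGreatest_spec (P := fun i => E ∈ g i) (m := iE) hiEE hEg
    have hIE : I ≤ E := Nat.findGreatest_le E
    have hImax : ∀ i', I < i' → i' ≤ E → E ∉ g i' :=
      fun i' h1 h2 => Nat.findGreatest_is_greatest (P := fun i => E ∈ g i) h1 h2
    obtain ⟨α, β, hαβ, hEα⟩ := exists_first_mem hIg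
    have hsmall : ∀ i x, i ≤ E → i ≤ n → x ∈ g i → x ≤ E := by
      intro i x hiE hin hxg
      by_contra hgt
      push_neg at hgt
      have hxn : x < n := hb _ (hjm i hin x hxg)
      exact hEmax x hgt (by omega) ((hPAiff x).mpr ⟨i, by omega, hin, hxg⟩)
    have hsw := splitW g E n hEn
    rcases eq_or_lt_of_le hIE with heq | hlt
    · -- I = E : the junk E is in segment g E
      rw [heq] at hαβ
      refine ⟨g n ++ (((List.range' (E+1) (n-E-1)).reverse).map (fun i => i :: g i)).flatten,
        E, α, β ++ WW g E, ?_, Or.inl ?_⟩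
      · rw [hv, hsw, hαβ]
        simp [List.append_assoc]
      · intro x hx
        have hxle : x ≤ E := hsmall E x le_rfl (by omega)
          (by rw [hαβ]; exact List.mem_append_left _ hx)
        have hxne : x ≠ E := fun hxe => hEα (hxe ▸ hx)
        omega
    · -- I < E
      have hsw2 := splitW g I E hlt
      refine ⟨g n ++ (((List.range' (E+1) (n-E-1)).reverse).map (fun i => i :: g i)).flatten,
        E, g E ++ ((((List.range' (I+1) (E-I-1)).reverse).map (fun i => i :: g i)).flatten
          ++ I :: α), β ++ WW g I, ?_, Or.inl ?_⟩
      · rw [hv, hsw, hsw2, hαβ]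
        simp [List.append_assoc]
      · intro x hx
        rcases List.mem_append.mp hx with hx1 | hx2
        · -- x ∈ g E
          have hxle : x ≤ E := hsmall E x le_rfl (by omega) hx1
          have hxne : x ≠ E := fun hxe => hg E hEn (hxe ▸ hx1)
          omega
        · rcases List.mem_append.mp hx2 with hx3 | hx4
          · -- x ∈ Mid2
            obtain ⟨i, h1, h2, h3⟩ := mem_mid hx3
            have hiE : i < E := by omega
            rcases h3 with h5 | h6
            · omega
            · have hxle : x ≤ E := hsmall i x (by omega) (by omega) h6
              have hxne : x ≠ E := fun hxe => hImax i (by omega) (by omega) (hxe ▸ h6)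
              omega
          · rcases List.mem_cons.mp hx4 with h5 | h6
            · omega
            · have hxle : x ≤ E := hsmall I x (by omega) (by omega)
                (by rw [hαβ]; exact List.mem_append_left _ h6)
              have hxne : x ≠ E := fun hxe => hEα (hxe ▸ h6)
              omega
  case neg =>
    -- CASE B : every junk letter sits strictly before its chain position
    have hB : ∀ c i, i ≤ c → i ≤ n → c ∉ g i :=
      fun c i h1 h2 hcg => hA ⟨c, (hPAiff c).mpr ⟨i, h1, h2, hcg⟩⟩
    have hPB₀ : ∃ c, ∃ i ≤ n, c ∈ g i := ⟨c₀, i₀, hi₀n, hc₀⟩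
    set E := Nat.find hPB₀ with hE
    obtain ⟨iE, hiEn, hEg⟩ := Nat.find_spec hPB₀
    have hEmin : ∀ c < E, ¬ ∃ i ≤ n, c ∈ g i := fun c h => Nat.find_min hPB₀ h
    have hEn : E < n := hb _ (hjm iE hiEn E hEg)
    have hIw : ∃ i, E ∈ g i := ⟨iE, hEg⟩
    set I := Nat.find hIw with hI
    have hIg : E ∈ g I := Nat.find_spec hIw
    have hImin : ∀ i < I, E ∉ g i := fun i h => Nat.find_min hIw h
    have hIn : I ≤ n := le_trans (Nat.find_min' hIw hEg) hiEn
    have hEI : E < I := by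
      by_contra hc
      push_neg at hc
      exact hB E I hc hIn hIg
    obtain ⟨α, β, hαβ, hEβ⟩ := exists_last_mem hIg
    have hbig : ∀ i x, i ≤ n → x ∈ g i → E ≤ x := by
      intro i x hin hxg
      by_contra hlt
      push_neg at hlt
      exact hEmin x hlt ⟨i, hin, hxg⟩
    rcases eq_or_lt_of_le hIn with heq | hltn
    · -- I = n : the junk E is in the top segment
      rw [heq] at hαβ
      have hsw := splitW g E n hEn
      refine ⟨α, E, β ++ (((List.range' (E+1) (n-E-1)).reverse).map (fun i => i :: g i)).flatten,
        g E ++ WW g E, ?_, Or.inr ?_⟩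
      · rw [hv, hsw, hαβ]
        simp [List.append_assoc]
      · intro x hx
        rcases List.mem_append.mp hx with hx1 | hx2
        · have hxge : E ≤ x := hbig n x le_rfl (by rw [hαβ]; simp [hx1])
          have hxne : x ≠ E := fun hxe => hEβ (hxe ▸ hx1)
          omega
        · obtain ⟨i, h1, h2, h3⟩ := mem_mid hx2
          rcases h3 with h5 | h6
          · omega
          · have hxge : E ≤ x := hbig i x (by omega) h6
            have hxne : x ≠ E := fun hxe => hImin i (by omega) (hxe ▸ h6)
            omega
    · -- I < n
      have hsw := splitW g I n hltn
      have hsw2 := splitW g E I hEI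
      refine ⟨g n ++ ((((List.range' (I+1) (n-I-1)).reverse).map (fun i => i :: g i)).flatten
          ++ I :: α),
        E, β ++ (((List.range' (E+1) (I-E-1)).reverse).map (fun i => i :: g i)).flatten,
        g E ++ WW g E, ?_, Or.inr ?_⟩
      · rw [hv, hsw, hsw2, hαβ]
        simp [List.append_assoc]
      · intro x hx
        rcases List.mem_append.mp hx with hx1 | hx2
        · have hxge : E ≤ x := hbig I x (by omega) (by rw [hαβ]; simp [hx1])
          have hxne : x ≠ E := fun hxe => hEβ (hxe ▸ hx1)
          omega
        · obtain ⟨i, h1, h2, h3⟩ := mem_mid hx2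
          rcases h3 with h5 | h6
          · omega
          · have hxge : E ≤ x := hbig i x (by omega) h6
            have hxne : x ≠ E := fun hxe => hImin i (by omega) (hxe ▸ h6)
            omega

lemma desc_map : (descList n 1 n).map Fin.val = (List.range' 0 n).reverse := by
  unfold descList
  have hf : (List.finRange n).filter (fun k => decide (1 ≤ k.val + 1 ∧ k.val + 1 ≤ n)) =
      List.finRange n := by
    apply List.filter_eq_self.mpr
    intro a _
    simp only [decide_eq_true_eq]
    exact ⟨by omega, a.isLt⟩
  rw [hf, List.map_reverse]
  rw [show (List.finRange n).map Fin.val = List.range n from List.ext_getElem (by simp) (by simp), List.range_eq_range']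

lemma lemC (v : List (Fin n)) (hchi : n ≤ chiN (v.map Fin.val) 0) (hlen : n < v.length) :
    ∃ (p : List (Fin n)) (c : Fin n) (u q : List (Fin n)),
      v = p ++ c :: (u ++ c :: q) ∧ ((∀ x ∈ u, x < c) ∨ (∀ x ∈ u, c < x)) := by
  obtain ⟨P, C, U, Q, hm, hcase⟩ := lemCN n (v.map Fin.val)
    (by intro x hx; obtain ⟨i, _, rfl⟩ := List.mem_map.mp hx; exact i.isLt)
    hchi (by simpa using hlen)
  rw [List.map_eq_append_iff] at hm
  obtain ⟨p, t1, hv1, hmp, hmt1⟩ := hm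
  rw [List.map_eq_cons_iff] at hmt1
  obtain ⟨c, t2, ht1, hcC, hmt2⟩ := hmt1
  rw [List.map_eq_append_iff] at hmt2
  obtain ⟨u, t3, ht2, hmu, hmt3⟩ := hmt2
  rw [List.map_eq_cons_iff] at hmt3
  obtain ⟨c', q, ht3, hc'C, hmq⟩ := hmt3
  have hcc' : c' = c := Fin.val_injective (by rw [hcC, hc'C])
  refine ⟨p, c, u, q, ?_, ?_⟩
  · rw [hv1, ht1, ht2, ht3, hcc']
  · rcases hcase with hlo | hhi
    · left
      intro x hx
      have : x.val ∈ U := by rw [← hmu]; exact List.mem_map_of_mem hx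
      have := hlo _ this
      rw [Fin.lt_def, hcC]
      exact this
    · right
      intro x hx
      have : x.val ∈ U := by rw [← hmu]; exact List.mem_map_of_mem hx
      have := hhi _ this
      rw [Fin.lt_def, hcC]
      exact this

lemma main_aux : ∀ (L : ℕ) (v : List (Fin n)), v.length ≤ L →
    n ≤ chiN (v.map Fin.val) 0 → phiL n v = fEl n := by
  intro L
  induction L with
  | zero =>
    intro v hv hchi
    have hvnil : v = [] := List.length_eq_zero_iff.mp (by omega)
    subst hvnil
    have hn0 : n = 0 := by simpa using hchi
    subst hn0
    rfl
  | succ L ih =>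
    intro v hv hchi
    have hlb : n ≤ v.length := by
      have := chiN_le (v.map Fin.val) 0
      simp only [List.length_map] at this
      omega
    rcases eq_or_lt_of_le hlb with heq | hlt
    · -- exact length: v is the descending chain
      have h1 : chiN (v.map Fin.val) 0 = 0 + (v.map Fin.val).length := by
        have h2 := chiN_le (v.map Fin.val) 0
        simp only [List.length_map] at h2 ⊢
        omega
      have h2 := chiN_eq_max _ 0 h1
      have h3 : v.map Fin.val = (descList n 1 n).map Fin.val := by
        rw [h2, desc_map]
        congr 1
        simp [← heq]
      have h4 : v = descList n 1 n :=
        (List.map_injective_iff.mpr Fin.val_injective) h3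
      rw [h4]
      rfl
    · obtain ⟨p, c, u, q, hdec, hcase⟩ := lemC v hchi hlt
      have hlv : v.length = p.length + u.length + q.length + 2 := by
        rw [hdec]; simp; omega
      rcases hcase with hlo | hhi
      · have hveq : phiL n v = phiL n (p ++ c :: (u ++ q)) := by
          rw [hdec]; exact redA p u q c hlo
        have hchi' : n ≤ chiN ((p ++ c :: (u ++ q)).map Fin.val) 0 := by
          rw [← chi_congr hveq 0]; exact hchi
        have hlen' : (p ++ c :: (u ++ q)).length ≤ L := by simp; omega
        rw [hveq]
        exact ih _ hlen' hchi'
      · have hveq : phiL n v = phiL n (p ++ (u ++ c :: q)) := by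
          rw [hdec]; exact redA' p u q c hhi
        have hchi' : n ≤ chiN ((p ++ (u ++ c :: q)).map Fin.val) 0 := by
          rw [← chi_congr hveq 0]; exact hchi
        have hlen' : (p ++ (u ++ c :: q)).length ≤ L := by simp; omega
        rw [hveq]
        exact ih _ hlen' hchi'

lemma main_f (v : List (Fin n)) (hchi : n ≤ chiN (v.map Fin.val) 0) : phiL n v = fEl n :=
  main_aux v.length v le_rfl hchi

lemma closure_repr {S : Set (Fin n)} {x : K n} (hx : x ∈ Submonoid.closure (gen '' S)) :
    ∃ u : List (Fin n), (∀ i ∈ u, i ∈ S) ∧ phiL n u = x := by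
  induction hx using Submonoid.closure_induction with
  | mem a ha =>
    obtain ⟨i, hiS, rfl⟩ := ha
    exact ⟨[i], by simpa using hiS, phiL_singleton i⟩
  | one => exact ⟨[], by simp, rfl⟩
  | mul a b ha hb iha ihb =>
    obtain ⟨ua, h1, h2⟩ := iha
    obtain ⟨ub, h3, h4⟩ := ihb
    refine ⟨ua ++ ub, ?_, by rw [phiL_append, h2, h4]⟩
    intro i hi
    rcases List.mem_append.mp hi with h | h
    exacts [h1 i h, h3 i h]

/-- If `x` lies in the submonoid generated by `a_1, …, a_{n-1}`, `z` lies in the submonoid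
generated by `a_2, …, a_n`, and `x * y * z = f`, then `y = f`. -/
theorem middle_cancel (n : ℕ) (hn : 1 ≤ n) (x y z : K n)
    (hx : x ∈ lower n) (hz : z ∈ upper n)
    (h : x * y * z = fEl n) : y = fEl n := by
  obtain ⟨u, hu, hux⟩ := closure_repr hx
  obtain ⟨w, hw, hwz⟩ := closure_repr hz
  obtain ⟨m, hm⟩ := Con.mk'_surjective (c := conGen (Rel n)) y
  have hvy : phiL n (FreeMonoid.toList m) = y := by
    unfold phiL
    rw [FreeMonoid.ofList_toList]
    exact hm
  set v := FreeMonoid.toList m with hv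
  have hb : phiL n (u ++ (v ++ w)) = phiL n (descList n 1 n) := by
    rw [phiL_append, phiL_append, hux, hvy, hwz, ← mul_assoc]
    exact h
  have hchain := chi_congr hb 0
  rw [List.map_append, List.map_append, chiN_append, chiN_append, desc_map,
    chiN_chain 0 n] at hchain
  have hW0 : chiN (w.map Fin.val) 0 = 0 := by
    apply chiN_no_letter
    intro a ha
    obtain ⟨i, hi, rfl⟩ := List.mem_map.mp ha
    exact hw i hi
  rw [hW0] at hchain
  have hU : ∀ a ∈ u.map Fin.val, a + 1 ≠ n := by
    intro a ha
    obtain ⟨i, hi, rfl⟩ := List.mem_map.mp ha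
    exact hu i hi
  have hvchi : n ≤ chiN (v.map Fin.val) 0 :=
    chiN_block n (u.map Fin.val) hU _ (by omega)
  rw [← hvy]
  exact main_f v hvchi

end Aux

end Kiselman
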